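/- arXiv:1503.02778 — 3 statements merged into one kernel-verified Lean document; each statement's English description precedes it below -/
import Mathlib

section
/- Let $\Phi$ denote the standard normal CDF. For any $c \in \mathbb{R}$, $\varepsilon > 0$, $t > 0$, one has $\Phi(c\sqrt{t} + \varepsilon/\sqrt{t}) - e^{-2c\varepsilon}\Phi(c\sqrt{t} - \varepsilon/\sqrt{t}) \le \varepsilon(\sqrt{2/(\pi t)} + 2\max\{c,0\})$. -/
open Real

/-- The standard normal cumulative distribution function. -/
noncomputable def stdNormalCDF (x : ℝ) : ℝ :=
  ∫ u in Set.Iic x, Real.exp (-u ^ 2 / 2) / Real.sqrt (2 * Real.pi)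

/-!
Write `a = c√t - ε/√t` and `b = c√t + ε/√t`, and split the left-hand side as
`(Φ(b) - Φ(a)) + (1 - e^{-2cε}) Φ(a)`. The first term is at most `(b - a)/√(2π) = ε√(2/(πt))`
because the normal density is bounded by `1/√(2π)`; the second is at most `max (2cε) 0`
because `0 ≤ Φ(a) ≤ 1` and `1 - e^{-x} ≤ x`.
-/

open MeasureTheory ProbabilityTheory

lemma gaussianPDFReal_le (μ : ℝ) (v : NNReal) (x : ℝ) :
    gaussianPDFReal μ v x ≤ (√(2 * π * v))⁻¹ := by
  rw [gaussianPDFReal]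
  refine mul_le_of_le_one_right (by positivity) (exp_le_one_iff.2 ?_)
  exact div_nonpos_of_nonpos_of_nonneg (by nlinarith [sq_nonneg (x - μ)]) (by positivity)

lemma one_sub_exp_neg_mul_le_max {x p : ℝ} (hp₀ : 0 ≤ p) (hp₁ : p ≤ 1) :
    (1 - exp (-x)) * p ≤ max x 0 := by
  rcases le_or_gt x 0 with hx | hx
  · have : 1 - exp (-x) ≤ 0 := by linarith [one_le_exp (neg_nonneg.2 hx)]
    exact (mul_nonpos_of_nonpos_of_nonneg this hp₀).trans (le_max_right x 0)
  · have h₀ : 0 ≤ 1 - exp (-x) := by linarith [exp_le_one_iff.2 (neg_nonpos.2 hx.le)]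
    have h₁ : 1 - exp (-x) ≤ x := by linarith [add_one_le_exp (-x)]
    calc (1 - exp (-x)) * p ≤ 1 - exp (-x) := mul_le_of_le_one_right h₀ hp₁
      _ ≤ max x 0 := h₁.trans (le_max_left x 0)

namespace stdNormalCDF

lemma eq_setIntegral_gaussianPDFReal (x : ℝ) :
    stdNormalCDF x = ∫ u in Set.Iic x, gaussianPDFReal 0 1 u := by
  simp only [stdNormalCDF, gaussianPDFReal, NNReal.coe_one, mul_one, sub_zero, div_eq_inv_mul]

lemma nonneg (x : ℝ) : 0 ≤ stdNormalCDF x := by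
  rw [eq_setIntegral_gaussianPDFReal]
  exact setIntegral_nonneg measurableSet_Iic fun u _ ↦ gaussianPDFReal_nonneg 0 1 u

lemma le_one (x : ℝ) : stdNormalCDF x ≤ 1 := by
  rw [eq_setIntegral_gaussianPDFReal, ← integral_gaussianPDFReal_eq_one 0 one_ne_zero]
  exact setIntegral_le_integral (integrable_gaussianPDFReal 0 1)
    (ae_of_all _ (gaussianPDFReal_nonneg 0 1))

lemma abs_sub_le (a b : ℝ) :
    |stdNormalCDF b - stdNormalCDF a| ≤ |b - a| / √(2 * π) := by
  simp only [eq_setIntegral_gaussianPDFReal]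
  rw [intervalIntegral.integral_Iic_sub_Iic (integrable_gaussianPDFReal 0 1).integrableOn
    (integrable_gaussianPDFReal 0 1).integrableOn, ← Real.norm_eq_abs, div_eq_inv_mul]
  refine intervalIntegral.norm_integral_le_of_norm_le_const fun u _ ↦ ?_
  rw [Real.norm_of_nonneg (gaussianPDFReal_nonneg 0 1 u)]
  simpa using gaussianPDFReal_le 0 1 u

end stdNormalCDF

theorem bm_level_staying_formula_bound (c ε t : ℝ) (hε : 0 < ε) (ht : 0 < t) :
    stdNormalCDF (c * Real.sqrt t + ε / Real.sqrt t) -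
        Real.exp (-2 * c * ε) * stdNormalCDF (c * Real.sqrt t - ε / Real.sqrt t)
      ≤ ε * (Real.sqrt (2 / (Real.pi * t)) + 2 * max c 0) := by
  set a := c * √t - ε / √t
  set b := c * √t + ε / √t
  have hba : |b - a| / √(2 * π) = ε * √(2 / (π * t)) := by
    have hst : 0 < √t := sqrt_pos.2 ht
    rw [show b - a = 2 * ε / √t by ring, abs_of_pos (by positivity),
      sqrt_div' _ (by positivity : 0 ≤ π * t), sqrt_mul' _ ht.le, sqrt_mul' 2 pi_pos.le]
    field_simp
    rw [sq_sqrt zero_le_two]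
  have hmax : max (2 * c * ε) 0 = ε * (2 * max c 0) :=
    calc max (2 * c * ε) 0 = max (2 * c) 0 * ε := by rw [max_mul_of_nonneg _ _ hε.le, zero_mul]
      _ = ε * (2 * max c 0) := by rw [mul_max_of_nonneg _ _ zero_le_two, mul_zero, mul_comm]
  have hdiff := (le_abs_self _).trans (stdNormalCDF.abs_sub_le a b)
  have hrest := one_sub_exp_neg_mul_le_max (x := 2 * c * ε) (stdNormalCDF.nonneg a)
    (stdNormalCDF.le_one a)
  rw [neg_mul_eq_neg_mul, ← neg_mul] at hrest
  linarith
end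

section
/- Let $\Delta : [0,T) \to \mathbb{R}$ be continuously differentiable with $\Delta(0) = 0$, and suppose that $\Delta'(t) > 0$ at every $t \in [0,T)$ with $\Delta(t) = 0$. Then $\Delta(t) > 0$ for all $t \in (0,T)$. -/
/-!
Real induction shows `0 ≤ Δ` on `[0, T)`: the set `{Δ ≥ 0}` is closed, and from any of its
points it extends a little to the right, by continuity where `Δ > 0` and because `Δ` is
increasing through its zeros where `Δ = 0`. A zero `t > 0` is then impossible, since `Δ` would
be negative just left of `t`.
-/

open Set Filter Topology

lemma HasDerivAt.eventually_nhdsGT_lt {f : ℝ → ℝ} {f' x : ℝ} (hf : HasDerivAt f f' x)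
    (hf' : 0 < f') : ∀ᶠ y in 𝓝[>] x, f x < f y := by
  have hslope_pos := (hasDerivAt_iff_tendsto_slope.1 hf).eventually (eventually_gt_nhds hf')
  filter_upwards [hslope_pos.filter_mono (nhdsGT_le_nhdsNE x), self_mem_nhdsWithin]
    with y hslope hxy
  exact (slope_pos_iff hxy).1 hslope

lemma HasDerivAt.eventually_nhdsLT_lt {f : ℝ → ℝ} {f' x : ℝ} (hf : HasDerivAt f f' x)
    (hf' : 0 < f') : ∀ᶠ y in 𝓝[<] x, f y < f x := by
  have hslope_pos := (hasDerivAt_iff_tendsto_slope.1 hf).eventually (eventually_gt_nhds hf')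
  filter_upwards [hslope_pos.filter_mono (nhdsLT_le_nhdsNE x), self_mem_nhdsWithin]
    with y hslope hyx
  exact (slope_pos_iff_gt hyx).1 hslope

lemma nonneg_of_hasDerivAt_pos_at_zeros {f f' : ℝ → ℝ} {a b : ℝ}
    (hf : ∀ x ∈ Icc a b, HasDerivAt f (f' x) x) (ha : 0 ≤ f a)
    (hpos : ∀ x ∈ Ico a b, f x = 0 → 0 < f' x) :
    ∀ x ∈ Icc a b, 0 ≤ f x := by
  have hcont : ContinuousOn f (Icc a b) := fun x hx => (hf x hx).continuousAt.continuousWithinAt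
  have hclosed : IsClosed ({x | 0 ≤ f x} ∩ Icc a b) := by
    rw [inter_comm]
    exact hcont.preimage_isClosed_of_isClosed isClosed_Icc isClosed_Ici
  refine hclosed.Icc_subset_of_forall_mem_nhdsWithin ha fun x ⟨hfx, hx⟩ => ?_
  rcases (show 0 ≤ f x from hfx).eq_or_lt with hzero | hfx_pos
  · filter_upwards [(hf x (Ico_subset_Icc_self hx)).eventually_nhdsGT_lt
      (hpos x hx hzero.symm)] with y hy
    exact hzero.le.trans hy.le
  · filter_upwards [nhdsWithin_le_nhds
      ((hf x (Ico_subset_Icc_self hx)).continuousAt.eventually (lt_mem_nhds hfx_pos))] with y hy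
    exact hy.le

theorem pos_of_deriv_pos_at_zeros_general
    (T : ℝ) (Δ Δ' : ℝ → ℝ)
    (hderiv : ∀ t ∈ Set.Ico (0:ℝ) T, HasDerivAt Δ (Δ' t) t)
    (h0 : Δ 0 = 0)
    (hpos : ∀ t ∈ Set.Ico (0:ℝ) T, Δ t = 0 → 0 < Δ' t) :
    ∀ t ∈ Set.Ioo (0:ℝ) T, 0 < Δ t := by
  intro t ⟨ht0, htT⟩
  have hnonneg : ∀ x ∈ Icc 0 t, 0 ≤ Δ x :=
    nonneg_of_hasDerivAt_pos_at_zeros (fun x hx => hderiv x ⟨hx.1, hx.2.trans_lt htT⟩) h0.ge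
      fun x hx => hpos x ⟨hx.1, hx.2.trans htT⟩
  refine (hnonneg t ⟨ht0.le, le_rfl⟩).lt_of_ne' fun hzero => ?_
  have htmem : t ∈ Ico 0 T := ⟨ht0.le, htT⟩
  have hneg_left := (hderiv t htmem).eventually_nhdsLT_lt (hpos t htmem hzero)
  obtain ⟨y, hy_neg, hy⟩ := (hneg_left.and (Ioo_mem_nhdsLT ht0)).exists
  exact (hzero ▸ hy_neg).not_ge (hnonneg y (Ioo_subset_Icc_self hy))

/-- A `C¹` function vanishing at `0` whose derivative is strictly positive at every zero
must be strictly positive on `(0, T)`. -/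
theorem pos_of_deriv_pos_at_zeros
    (T : ℝ) (Δ Δ' : ℝ → ℝ)
    (hderiv : ∀ t ∈ Set.Ico (0:ℝ) T, HasDerivAt Δ (Δ' t) t)
    (hcont : ContinuousOn Δ' (Set.Ico 0 T))
    (h0 : Δ 0 = 0)
    (hpos : ∀ t ∈ Set.Ico (0:ℝ) T, Δ t = 0 → 0 < Δ' t) :
    ∀ t ∈ Set.Ioo (0:ℝ) T, 0 < Δ t :=
  pos_of_deriv_pos_at_zeros_general T Δ Δ' hderiv h0 hpos
end

section
/- Let $m \ge 1$, $K \ge 0$, $r > 0$, and $h \in (0, r/K)$ (with $r/K := \infty$ if $K = 0$). For standard $m$-dimensional Brownian motion $\vect{W}$ started at $0$, the probability that $\vect{W}$ exits the shrinking ball before time $h$ satisfies $\mathbb{P}(\exists s \in [0,h]: \|\vect{W}_s\| \ge r - Ks) \le 2m \exp(rK/m - r^2/(2hm))$. -/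
/-!
If `‖W_s‖ ≥ r - K s` for some `s ≤ h`, then `‖W_s‖ ≥ ρ := r - K h`, so some coordinate has
`|W_s^i| ≥ c := ρ / √m`: the ball is replaced by a box, and a union bound over its `2m` faces
leaves the one-dimensional estimate `P(∃ s ≤ h, c ≤ ±B_s) ≤ exp(-c² / 2h)`, after which
`-ρ² / (2hm) ≤ rK/m - r² / (2hm)` finishes.

The one-dimensional estimate is a Chernoff bound for the running maximum: on a finite grid of
times, `exp (l B_t)` is a nonnegative submartingale, so Doob's maximal inequality gives
`P(max_k l B_{t_k} ≥ a) ≤ exp(-a + l² h / 2)`; refining dyadic grids and using continuity of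
paths carries this to `[0, h]`, and `l = ± c / h`, `a = c² / h` optimises it.
-/

open MeasureTheory ProbabilityTheory

/-- `W` is a standard one-dimensional Brownian motion under `P`. -/
def IsStandardBM {Ω : Type*} [MeasurableSpace Ω] (P : Measure Ω) (W : ℝ → Ω → ℝ) : Prop :=
  (∀ t, Measurable (W t)) ∧
  (∀ᵐ ω ∂P, W 0 ω = 0) ∧
  (∀ᵐ ω ∂P, Continuous fun t => W t ω) ∧
  (∀ s t : ℝ, 0 ≤ s → s ≤ t →
    Measure.map (fun ω => W t ω - W s ω) P = gaussianReal 0 (t - s).toNNReal) ∧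
  (∀ n : ℕ, ∀ t : Fin (n + 1) → ℝ, Monotone t → (∀ i, 0 ≤ t i) →
    iIndepFun
      (fun (i : Fin n) ω => W (t i.succ) ω - W (t i.castSucc) ω) P)

/-- `W` is a standard `m`-dimensional Brownian motion under `P`: each coordinate is a
standard one-dimensional Brownian motion and the coordinate processes are independent. -/
def IsStandardBMn {Ω : Type*} [MeasurableSpace Ω] (m : ℕ) (P : Measure Ω)
    (W : ℝ → Ω → EuclideanSpace ℝ (Fin m)) : Prop :=
  (∀ i : Fin m, IsStandardBM P fun t ω => W t ω i) ∧
  iIndepFun (fun (i : Fin m) ω t => W t ω i) P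

open Real Finset

namespace ProbabilityTheory

variable {Ω : Type*} {mΩ : MeasurableSpace Ω} {μ : Measure Ω}

lemma integrable_exp_mul_of_map_eq_gaussianReal {X : Ω → ℝ} (hX : Measurable X) {m : ℝ}
    {v : NNReal} (hmap : μ.map X = gaussianReal m v) (l : ℝ) :
    Integrable (fun ω ↦ exp (l * X ω)) μ := by
  have := integrable_exp_mul_gaussianReal (μ := m) (v := v) l
  rw [← hmap] at this
  exact (integrable_map_measure (by fun_prop) hX.aemeasurable).mp this

variable {Y : ℕ → Ω → ℝ}

lemma iIndepFun.integrable_prod_range (hind : iIndepFun Y μ) (hmeas : ∀ i, Measurable (Y i))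
    (hint : ∀ i, Integrable (Y i) μ) (n : ℕ) : Integrable (∏ k ∈ range n, Y k) μ := by
  have := hind.isProbabilityMeasure
  induction n with
  | zero => exact integrable_const (1 : ℝ)
  | succ n ih =>
    rw [prod_range_succ]
    exact (hind.indepFun_finsetProd_of_notMem hmeas notMem_range_self).integrable_mul ih (hint n)

theorem iIndepFun.submartingale_prod_range (hY : ∀ i, StronglyMeasurable (Y i))
    (hind : iIndepFun Y μ) (hnonneg : 0 ≤ Y) (hint : ∀ i, Integrable (Y i) μ)
    (hmean : ∀ i, 1 ≤ μ[Y i]) :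
    Submartingale (fun n ↦ ∏ k ∈ range (n + 1), Y k) (Filtration.natural Y hY) μ := by
  have := hind.isProbabilityMeasure
  have hprod_int := hind.integrable_prod_range (fun i ↦ (hY i).measurable) hint
  have hadapted : StronglyAdapted (Filtration.natural Y hY) fun n ↦ ∏ k ∈ range (n + 1), Y k :=
    fun n ↦ Finset.stronglyMeasurable_prod _ fun k hk ↦
      (Filtration.stronglyAdapted_natural hY k).mono
        ((Filtration.natural Y hY).mono (Nat.lt_succ_iff.mp (mem_range.mp hk)))
  refine submartingale_nat hadapted (fun n ↦ hprod_int _) fun i ↦ ?_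
  have hpull : μ[(∏ k ∈ range (i + 1), Y k) * Y (i + 1) | Filtration.natural Y hY i]
      =ᵐ[μ] (∏ k ∈ range (i + 1), Y k) * μ[Y (i + 1) | Filtration.natural Y hY i] :=
    condExp_mul_of_stronglyMeasurable_left (hadapted i)
      (by rw [← prod_range_succ]; exact hprod_int _) (hint _)
  filter_upwards [hpull, hind.condExp_natural_ae_eq_of_lt hY (lt_add_one i)] with ω h1 h2
  rw [prod_range_succ _ (i + 1), h1, Pi.mul_apply, h2, prod_apply]
  exact le_mul_of_one_le_right (prod_nonneg fun k _ ↦ hnonneg k ω) (hmean _)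

theorem iIndepFun.measure_exists_le_prod_le (hY : ∀ i, StronglyMeasurable (Y i))
    (hind : iIndepFun Y μ) (hnonneg : 0 ≤ Y) (hint : ∀ i, Integrable (Y i) μ)
    (hmean : ∀ i, 1 ≤ μ[Y i]) (n : ℕ) {ε : ℝ} (hε : 0 < ε) :
    μ {ω | ∃ k ≤ n, ε ≤ ∏ j ∈ range (k + 1), Y j ω}
      ≤ ENNReal.ofReal (μ[∏ j ∈ range (n + 1), Y j] / ε) := by
  have := hind.isProbabilityMeasure
  set M : ℕ → Ω → ℝ := fun k ↦ ∏ j ∈ range (k + 1), Y j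
  have hM_nonneg : 0 ≤ M := fun k ω ↦ by
    simpa [M, prod_apply] using prod_nonneg fun j _ ↦ hnonneg j ω
  have hdoob := maximal_ineq (hind.submartingale_prod_range hY hnonneg hint hmean) hM_nonneg
    (ε := ε.toNNReal) n
  have hset : {ω | (ε.toNNReal : ℝ) ≤ (range (n + 1)).sup' nonempty_range_add_one fun k ↦ M k ω}
      = {ω | ∃ k ≤ n, ε ≤ ∏ j ∈ range (k + 1), Y j ω} := by
    ext ω
    simp [M, le_sup'_iff, Real.coe_toNNReal _ hε.le, prod_apply]
  rw [hset] at hdoob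
  have hM_int : Integrable (M n) μ :=
    hind.integrable_prod_range (fun i ↦ (hY i).measurable) hint (n + 1)
  have hrestrict := setIntegral_le_integral (s := {ω | ∃ k ≤ n, ε ≤ ∏ j ∈ range (k + 1), Y j ω})
    hM_int (ae_of_all _ (hM_nonneg n))
  rw [ENNReal.ofReal_div_of_pos hε, ENNReal.le_div_iff_mul_le (by simp [hε]) (by simp), mul_comm]
  exact hdoob.trans (ENNReal.ofReal_le_ofReal hrestrict)

end ProbabilityTheory

lemma ContinuousAt.exists_dyadic_lt {f : ℝ → ℝ} {h s a : ℝ} (hf : ContinuousAt f s)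
    (hh : 0 < h) (hs : s ∈ Set.Icc 0 h) (ha : a < f s) :
    ∃ N k : ℕ, k ≤ 2 ^ N ∧ a < f (h * k / 2 ^ N) := by
  obtain ⟨δ, hδ, hball⟩ := Metric.eventually_nhds_iff.mp (hf.eventually (lt_mem_nhds ha))
  obtain ⟨N, hN⟩ := exists_pow_lt_of_lt_one (div_pos hδ hh) (by norm_num : (1 / 2 : ℝ) < 1)
  have h2N : (0 : ℝ) < 2 ^ N := by positivity
  set x := s * 2 ^ N / h
  have hx : 0 ≤ x := by have := hs.1; positivity
  refine ⟨N, ⌊x⌋₊, ?_, hball ?_⟩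
  · refine Nat.floor_le_of_le ?_
    rw [div_le_iff₀ hh]
    push_cast
    nlinarith [hs.2]
  · have hs_eq : s = h * x / 2 ^ N := by simp only [x]; field_simp
    have hlow : h * ⌊x⌋₊ / 2 ^ N ≤ s := by
      rw [hs_eq]; gcongr; exact Nat.floor_le hx
    have hup : s < h * ⌊x⌋₊ / 2 ^ N + h / 2 ^ N := by
      rw [hs_eq, ← add_div, ← mul_add_one]; gcongr; exact Nat.lt_floor_add_one x
    have hstep : h / 2 ^ N < δ := by
      rw [div_pow, one_pow, lt_div_iff₀ hh] at hN
      rwa [div_eq_mul_one_div, mul_comm]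
    rw [Real.dist_eq, abs_sub_lt_iff]
    constructor <;> linarith

lemma EuclideanSpace.exists_norm_le_sqrt_card_mul_abs {ι : Type*} [Fintype ι] [Nonempty ι]
    (x : EuclideanSpace ℝ ι) : ∃ i, ‖x‖ ≤ √(Fintype.card ι) * |x i| := by
  obtain ⟨i, hi⟩ := Finite.exists_max fun j ↦ |x j|
  refine ⟨i, ?_⟩
  calc ‖x‖ = √(∑ j, ‖x j‖ ^ 2) := EuclideanSpace.norm_eq x
    _ ≤ √(∑ _j : ι, |x i| ^ 2) := by
      gcongr with j
      rw [Real.norm_eq_abs]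
      exact hi j
    _ = √(Fintype.card ι) * |x i| := by
      rw [sum_const, card_univ, nsmul_eq_mul, Real.sqrt_mul (by positivity), Real.sqrt_sq_eq_abs,
        abs_abs]

namespace IsStandardBM

variable {Ω : Type*} {mΩ : MeasurableSpace Ω} {P : Measure Ω} {B : ℝ → Ω → ℝ}

lemma iIndepFun_increments (hB : IsStandardBM P B) {t : ℕ → ℝ} (ht : Monotone t)
    (ht_nonneg : ∀ k, 0 ≤ t k) :
    iIndepFun (fun k ω ↦ B (t (k + 1)) ω - B (t k) ω) P := by
  refine iIndepFun_iff_finset.mpr fun s ↦ ?_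
  set n := s.sup id + 1
  have hlt : ∀ k ∈ s, k < n := fun k hk ↦ Nat.lt_succ_of_le (le_sup (f := id) hk)
  exact (hB.2.2.2.2 n (fun i ↦ t i) (fun i j hij ↦ ht hij) (fun i ↦ ht_nonneg i)).precomp
    (g := fun k : s ↦ (⟨k, hlt k k.2⟩ : Fin n)) fun i j hij ↦ Subtype.ext (congrArg Fin.val hij)

lemma integrable_exp_mul_sub (hB : IsStandardBM P B) {s t : ℝ} (hs : 0 ≤ s) (hst : s ≤ t)
    (l : ℝ) : Integrable (fun ω ↦ exp (l * (B t ω - B s ω))) P :=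
  integrable_exp_mul_of_map_eq_gaussianReal ((hB.1 t).sub (hB.1 s)) (hB.2.2.2.1 s t hs hst) l

lemma integral_exp_mul_sub (hB : IsStandardBM P B) {s t : ℝ} (hs : 0 ≤ s) (hst : s ≤ t)
    (l : ℝ) : ∫ ω, exp (l * (B t ω - B s ω)) ∂P = exp (l ^ 2 * (t - s) / 2) := by
  have := mgf_gaussianReal (hB.2.2.2.1 s t hs hst) l
  rw [mgf] at this
  rw [this, Real.coe_toNNReal _ (sub_nonneg.mpr hst)]
  ring_nf

theorem measure_exists_le_mul_sub_le (hB : IsStandardBM P B) {t : ℕ → ℝ} (ht : Monotone t)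
    (ht0 : t 0 = 0) (l : ℝ) {a : ℝ} (ha : 0 < a) (n : ℕ) :
    P {ω | ∃ k ≤ n, a ≤ l * (B (t k) ω - B 0 ω)}
      ≤ ENNReal.ofReal (exp (-a + l ^ 2 * t n / 2)) := by
  obtain _ | n := n
  · simp [ht0, ha.not_ge]
  have ht_nonneg : ∀ k, 0 ≤ t k := fun k ↦ ht0 ▸ ht k.zero_le
  set Y : ℕ → Ω → ℝ := fun j ω ↦ exp (l * (B (t (j + 1)) ω - B (t j) ω))
  have hprod : ∀ k ω, ∏ j ∈ range k, Y j ω = exp (l * (B (t k) ω - B 0 ω)) := fun k ω ↦ by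
    rw [← exp_sum, ← mul_sum, sum_range_sub (fun j ↦ B (t j) ω), ht0]
  -- Doob's index `k` stands for the time `t (k + 1)`; the time `t 0` is excluded by `0 < a`.
  have hsub : {ω | ∃ k ≤ n + 1, a ≤ l * (B (t k) ω - B 0 ω)}
      ⊆ {ω | ∃ k ≤ n, exp a ≤ ∏ j ∈ range (k + 1), Y j ω} := by
    rintro ω ⟨_ | k, hk, hak⟩
    · simp [ht0, ha.not_ge] at hak
    · exact ⟨k, by omega, by rwa [hprod, exp_le_exp]⟩
  have hind : iIndepFun Y P :=
    (hB.iIndepFun_increments ht ht_nonneg).comp (fun _ x ↦ exp (l * x)) fun _ ↦ by fun_prop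
  have hY_meas : ∀ j, StronglyMeasurable (Y j) := fun j ↦
    (measurable_exp.comp (((hB.1 _).sub (hB.1 _)).const_mul l)).stronglyMeasurable
  have hY_int : ∀ j, Integrable (Y j) P := fun j ↦
    hB.integrable_exp_mul_sub (ht_nonneg j) (ht j.le_succ) l
  have hY_mean : ∀ j, 1 ≤ ∫ ω, Y j ω ∂P := fun j ↦ by
    rw [hB.integral_exp_mul_sub (ht_nonneg j) (ht j.le_succ)]
    exact one_le_exp (by nlinarith [ht j.le_succ])
  have hmean : ∫ ω, (∏ j ∈ range (n + 1), Y j) ω ∂P = exp (l ^ 2 * t (n + 1) / 2) := by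
    simp_rw [prod_apply, hprod, hB.integral_exp_mul_sub le_rfl (ht_nonneg _), sub_zero]
  calc P {ω | ∃ k ≤ n + 1, a ≤ l * (B (t k) ω - B 0 ω)}
      ≤ P {ω | ∃ k ≤ n, exp a ≤ ∏ j ∈ range (k + 1), Y j ω} := measure_mono hsub
    _ ≤ ENNReal.ofReal ((∫ ω, (∏ j ∈ range (n + 1), Y j) ω ∂P) / exp a) :=
      hind.measure_exists_le_prod_le hY_meas (fun j ω ↦ (exp_pos _).le) hY_int hY_mean n
        (exp_pos a)
    _ = ENNReal.ofReal (exp (-a + l ^ 2 * t (n + 1) / 2)) := by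
      rw [hmean, ← exp_sub]
      ring_nf

theorem measure_exists_Icc_lt_mul_le (hB : IsStandardBM P B) {h : ℝ} (hh : 0 < h) (l : ℝ)
    {a : ℝ} (ha : 0 < a) :
    P {ω | ∃ s ∈ Set.Icc 0 h, a < l * B s ω} ≤ ENNReal.ofReal (exp (-a + l ^ 2 * h / 2)) := by
  set t : ℕ → ℕ → ℝ := fun N k ↦ h * k / 2 ^ N
  set E : ℕ → Set Ω := fun N ↦ {ω | ∃ k ≤ 2 ^ N, a ≤ l * (B (t N k) ω - B 0 ω)}
  have hE_mono : Monotone E := by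
    refine monotone_nat_of_le_succ fun N ω ⟨k, hk, hak⟩ ↦ ⟨2 * k, by rw [pow_succ]; omega, ?_⟩
    have hdouble : t (N + 1) (2 * k) = t N k := by
      simp only [t]; push_cast; field_simp; ring
    rwa [hdouble]
  have hE_le : ∀ N, P (E N) ≤ ENNReal.ofReal (exp (-a + l ^ 2 * h / 2)) := fun N ↦ by
    have ht : Monotone (t N) := fun i j hij ↦ by simp only [t]; gcongr
    have htop : t N (2 ^ N) = h := by simp only [t]; push_cast; field_simp
    simpa only [htop] using hB.measure_exists_le_mul_sub_le ht (by simp [t]) l ha (2 ^ N)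
  have hsub : {ω | ∃ s ∈ Set.Icc 0 h, a < l * B s ω} ≤ᵐ[P] ⋃ N, E N := by
    filter_upwards [hB.2.1, hB.2.2.1] with ω h0 hcont
    rintro ⟨s, hs, has⟩
    obtain ⟨N, k, hk, hak⟩ :=
      ((continuous_const.mul hcont).continuousAt (x := s)).exists_dyadic_lt hh hs has
    exact Set.mem_iUnion.mpr ⟨N, k, hk, by rw [h0, sub_zero]; exact hak.le⟩
  calc P {ω | ∃ s ∈ Set.Icc 0 h, a < l * B s ω} ≤ P (⋃ N, E N) := measure_mono_ae hsub
    _ = ⨆ N, P (E N) := hE_mono.measure_iUnion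
    _ ≤ _ := iSup_le hE_le

theorem measure_exists_Icc_le_mul_le (hB : IsStandardBM P B) {h : ℝ} (hh : 0 < h) (l : ℝ)
    {a : ℝ} (ha : 0 < a) :
    P {ω | ∃ s ∈ Set.Icc 0 h, a ≤ l * B s ω} ≤ ENNReal.ofReal (exp (-a + l ^ 2 * h / 2)) := by
  have hcont : ContinuousAt (fun b ↦ ENNReal.ofReal (exp (-b + l ^ 2 * h / 2))) a :=
    (ENNReal.continuous_ofReal.comp (by fun_prop)).continuousAt
  refine ge_of_tendsto (hcont.tendsto.mono_left (nhdsWithin_le_nhds (s := Set.Iio a))) ?_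
  filter_upwards [Ioo_mem_nhdsLT ha] with b hb
  refine le_trans (measure_mono ?_) (hB.measure_exists_Icc_lt_mul_le hh l hb.1)
  exact fun ω ⟨s, hs, has⟩ ↦ ⟨s, hs, hb.2.trans_le has⟩

theorem measure_exists_Icc_le_abs_le (hB : IsStandardBM P B) {h : ℝ} (hh : 0 < h) {c : ℝ}
    (hc : 0 < c) :
    P {ω | ∃ s ∈ Set.Icc 0 h, c ≤ |B s ω|} ≤ ENNReal.ofReal (2 * exp (-c ^ 2 / (2 * h))) := by
  have hside : ∀ σ : ℝ, σ ^ 2 = 1 →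
      P {ω | ∃ s ∈ Set.Icc 0 h, c ^ 2 / h ≤ σ * c / h * B s ω}
        ≤ ENNReal.ofReal (exp (-c ^ 2 / (2 * h))) := fun σ hσ ↦ by
    convert hB.measure_exists_Icc_le_mul_le hh (σ * c / h) (by positivity : 0 < c ^ 2 / h)
      using 3
    field_simp
    linarith
  have hscale : ∀ x, c ≤ x → c ^ 2 / h ≤ c / h * x := fun x hx ↦ by
    rw [sq, mul_div_right_comm]
    exact mul_le_mul_of_nonneg_left hx (by positivity)
  have hsub : {ω | ∃ s ∈ Set.Icc 0 h, c ≤ |B s ω|}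
      ⊆ {ω | ∃ s ∈ Set.Icc 0 h, c ^ 2 / h ≤ 1 * c / h * B s ω}
        ∪ {ω | ∃ s ∈ Set.Icc 0 h, c ^ 2 / h ≤ -1 * c / h * B s ω} := by
    rintro ω ⟨s, hs, hcs⟩
    rcases le_abs'.mp hcs with hneg | hpos
    · exact Or.inr ⟨s, hs, by simpa [neg_div] using hscale _ (le_neg_of_le_neg hneg)⟩
    · exact Or.inl ⟨s, hs, by simpa using hscale _ hpos⟩
  calc P {ω | ∃ s ∈ Set.Icc 0 h, c ≤ |B s ω|}
      ≤ ENNReal.ofReal (exp (-c ^ 2 / (2 * h))) + ENNReal.ofReal (exp (-c ^ 2 / (2 * h))) :=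
        (measure_mono hsub).trans ((measure_union_le _ _).trans
          (add_le_add (hside 1 (by norm_num)) (hside (-1) (by norm_num))))
    _ = ENNReal.ofReal (2 * exp (-c ^ 2 / (2 * h))) := by
      rw [← ENNReal.ofReal_add (exp_pos _).le (exp_pos _).le, ← two_mul]

end IsStandardBM

theorem exit_shrinking_ball_bound_general
    {Ω : Type*} [MeasurableSpace Ω] (P : Measure Ω)
    (m : ℕ) (hm : 1 ≤ m) (W : ℝ → Ω → EuclideanSpace ℝ (Fin m))
    (hW : IsStandardBMn m P W)
    (K r h : ℝ) (hK : 0 ≤ K) (hh : 0 < h) (hhr : K * h < r) :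
    P {ω | ∃ s ∈ Set.Icc (0:ℝ) h, r - K * s ≤ ‖W s ω‖}
      ≤ ENNReal.ofReal (2 * m * Real.exp (r * K / m - r ^ 2 / (2 * h * m))) := by
  have hm_pos : (0 : ℝ) < m := by exact_mod_cast hm
  have : Nonempty (Fin m) := ⟨⟨0, hm⟩⟩
  set c := (r - K * h) / √m
  have hc : 0 < c := div_pos (by linarith) (by positivity)
  have hsub : {ω | ∃ s ∈ Set.Icc (0:ℝ) h, r - K * s ≤ ‖W s ω‖}
      ⊆ ⋃ i, {ω | ∃ s ∈ Set.Icc 0 h, c ≤ |W s ω i|} := by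
    rintro ω ⟨s, hs, hω⟩
    obtain ⟨i, hi⟩ := EuclideanSpace.exists_norm_le_sqrt_card_mul_abs (W s ω)
    refine Set.mem_iUnion.mpr ⟨i, s, hs, ?_⟩
    rw [div_le_iff₀' (by positivity)]
    calc r - K * h ≤ r - K * s := by nlinarith [hs.2]
      _ ≤ ‖W s ω‖ := hω
      _ ≤ √m * |W s ω i| := by simpa using hi
  have hexponent : -c ^ 2 / (2 * h) ≤ r * K / m - r ^ 2 / (2 * h * m) := by
    rw [div_pow, Real.sq_sqrt hm_pos.le]
    field_simp
    nlinarith [sq_nonneg (K * h)]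
  calc P {ω | ∃ s ∈ Set.Icc (0:ℝ) h, r - K * s ≤ ‖W s ω‖}
      ≤ ∑ i, P {ω | ∃ s ∈ Set.Icc 0 h, c ≤ |W s ω i|} :=
        (measure_mono hsub).trans (measure_iUnion_fintype_le _ _)
    _ ≤ ∑ _i : Fin m, ENNReal.ofReal (2 * exp (-c ^ 2 / (2 * h))) :=
        sum_le_sum fun i _ ↦ (hW.1 i).measure_exists_Icc_le_abs_le hh hc
    _ ≤ ENNReal.ofReal (2 * m * Real.exp (r * K / m - r ^ 2 / (2 * h * m))) := by
        rw [sum_const, card_univ, Fintype.card_fin, nsmul_eq_mul, ← ENNReal.ofReal_natCast,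
          ← ENNReal.ofReal_mul (by positivity), ← mul_assoc, mul_comm (m : ℝ)]
        gcongr

theorem exit_shrinking_ball_bound
    {Ω : Type*} [MeasurableSpace Ω] (P : Measure Ω) [IsProbabilityMeasure P]
    (m : ℕ) (hm : 1 ≤ m) (W : ℝ → Ω → EuclideanSpace ℝ (Fin m))
    (hW : IsStandardBMn m P W)
    (K r h : ℝ) (hK : 0 ≤ K) (hr : 0 < r) (hh : 0 < h) (hhr : K * h < r) :
    P {ω | ∃ s ∈ Set.Icc (0:ℝ) h, r - K * s ≤ ‖W s ω‖}
      ≤ ENNReal.ofReal (2 * m * Real.exp (r * K / m - r ^ 2 / (2 * h * m))) :=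
  exit_shrinking_ball_bound_general P m hm W hW K r h hK hh hhr
end
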